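/- arXiv:1002.0759 — 6 statements merged into one kernel-verified Lean document; each statement's English description precedes it below -/
import Mathlib

section
/- The geometric sequence {r^k} is an L^{(α)}-multiplier sequence if and only if r = 1. -/
open Polynomial

/-- The generalized Laguerre polynomial `L_n^{(α)}(x) = ∑_{k=0}^n binom(n+α, n-k) (-x)^k / k!`. -/
noncomputable def Laguerre (α : ℝ) (n : ℕ) : Polynomial ℝ :=
  ∑ k ∈ Finset.range (n + 1),
    Polynomial.C ((∏ i ∈ Finset.range (n - k), ((n : ℝ) + α - i)) / (Nat.factorial (n - k)) *
      (-1) ^ k / (Nat.factorial k)) * Polynomial.X ^ k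

/-- A real polynomial has only real zeros (with the convention that the zero polynomial
is considered to have only real zeros). -/
def RealRooted (p : Polynomial ℝ) : Prop :=
  p = 0 ∨ ∀ z : ℂ, Polynomial.aeval z p = 0 → z.im = 0

/-- A sequence `γ` is an `L^{(α)}`-multiplier sequence if the linear operator determined by
`T[L_n^{(α)}] = γ_n L_n^{(α)}` maps polynomials with only real zeros to polynomials with
only real zeros. -/
def IsLaguerreMS (α : ℝ) (γ : ℕ → ℝ) : Prop :=
  ∃ T : Polynomial ℝ →ₗ[ℝ] Polynomial ℝ,
    (∀ n, T (Laguerre α n) = γ n • Laguerre α n) ∧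
    ∀ p : Polynomial ℝ, RealRooted p → RealRooted (T p)

/-! The polynomial `(X - b)²` is real-rooted for every real `b`. Expanding it in the basis
`L₀, L₁, L₂` and applying the multipliers `1, r, r²` gives a quadratic with leading coefficient
`r²` and discriminant `4r²(r - 1)(2b + (r - 1)(α + 2))`. This is affine in `b`, so unless
`r = 1` some `b` makes it negative, and the image has non-real zeros. -/

lemma laguerre_zero (α : ℝ) : Laguerre α 0 = 1 := by
  simp [Laguerre]

lemma laguerre_one (α : ℝ) : Laguerre α 1 = C (α + 1) - X := by
  simp [Laguerre, Finset.sum_range_succ]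
  ring

lemma laguerre_two (α : ℝ) :
    Laguerre α 2 = C ((α + 1) * (α + 2) / 2) - C (α + 2) * X + C (1 / 2) * X ^ 2 := by
  simp [Laguerre, Finset.sum_range_succ, Finset.prod_range_succ, Nat.factorial]
  ring_nf

lemma realRooted_X_sub_C_sq (b : ℝ) : RealRooted ((X - C b) ^ 2) := by
  refine .inr fun z hz => ?_
  obtain rfl : z = b := by simpa [sub_eq_zero] using hz
  exact Complex.ofReal_im b

lemma discrim_nonneg_of_realRooted {a b c : ℝ} (ha : a ≠ 0)
    (h : RealRooted (C a * X ^ 2 + C b * X + C c)) : 0 ≤ discrim a b c := by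
  by_contra! hD
  have hne : C a * X ^ 2 + C b * X + C c ≠ 0 := fun h0 => ha <| by
    simpa using congrArg (coeff · 2) h0
  set t := Real.sqrt (-discrim a b c)
  have ht : (t : ℂ) ^ 2 = -discrim (a : ℂ) b c := by
    rw [← Complex.ofReal_pow, Real.sq_sqrt (neg_nonneg.2 hD.le)]
    simp [discrim]
  have ht0 : t ≠ 0 := (Real.sqrt_pos.2 (neg_pos.2 hD)).ne'
  set z : ℂ := (-b + Complex.I * t) / (2 * a) with hzdef
  have hz : aeval z (C a * X ^ 2 + C b * X + C c) = 0 := by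
    have := (quadratic_eq_zero_iff (a := (a : ℂ)) (b := b) (c := c) (Complex.ofReal_ne_zero.2 ha)
      (s := Complex.I * t) (by linear_combination ht - (t : ℂ) ^ 2 * Complex.I_sq) z).2 (.inl rfl)
    simpa [sq] using this
  have hzim : z.im = t / (2 * a) := by
    rw [hzdef, show (2 : ℂ) * a = (2 * a : ℝ) by push_cast; rfl, Complex.div_ofReal_im]
    simp
  exact h.elim hne fun hreal => div_ne_zero ht0 (mul_ne_zero two_ne_zero ha) (hzim ▸ hreal z hz)

lemma X_sub_C_sq_eq_sum_laguerre (α b : ℝ) :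
    (X - C b) ^ 2 = (2 : ℝ) • Laguerre α 2 + (2 * (b - α - 2)) • Laguerre α 1 +
      ((α + 1) * (α + 2) - 2 * (α + 1) * b + b ^ 2) • Laguerre α 0 := by
  refine Polynomial.funext fun t => ?_
  simp [laguerre_zero, laguerre_one, laguerre_two]
  ring

lemma IsLaguerreMS.geometric_discrim_nonneg {α r : ℝ} (h : IsLaguerreMS α (fun k => r ^ k))
    (hr : r ≠ 0) (b : ℝ) : 0 ≤ r ^ 2 * (r - 1) * (2 * b + (r - 1) * (α + 2)) := by
  obtain ⟨T, hT, hRR⟩ := h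
  have hTb : T ((X - C b) ^ 2) = C (r ^ 2) * X ^ 2 + C (-2 * r * (b + (r - 1) * (α + 2))) * X +
      C (r ^ 2 * (α + 1) * (α + 2) + 2 * r * (α + 1) * (b - α - 2) +
        ((α + 1) * (α + 2) - 2 * (α + 1) * b + b ^ 2)) := by
    rw [X_sub_C_sq_eq_sum_laguerre α, map_add, map_add, map_smul, map_smul, map_smul, hT, hT, hT]
    refine Polynomial.funext fun t => ?_
    simp [laguerre_zero, laguerre_one, laguerre_two]
    ring
  have hD := discrim_nonneg_of_realRooted (pow_ne_zero 2 hr) (hTb ▸ hRR _ (realRooted_X_sub_C_sq b))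
  rw [discrim] at hD
  linear_combination hD / 4

theorem geometric_laguerre_ms_iff_general (α r : ℝ) (hr : r ≠ 0) :
    IsLaguerreMS α (fun k => r ^ k) ↔ r = 1 := by
  refine ⟨fun h => ?_, ?_⟩
  · -- this choice of `b` turns the bound into `0 ≤ -r²(r - 1)²`
    have hD := h.geometric_discrim_nonneg hr (-(r - 1) * (α + 3) / 2)
    have : r ^ 2 * (r - 1) ^ 2 = 0 := by nlinarith [mul_nonneg (sq_nonneg r) (sq_nonneg (r - 1))]
    simpa [hr, sub_eq_zero] using this
  · rintro rfl
    exact ⟨LinearMap.id, by simp, fun _ hp => hp⟩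

/-- The geometric sequence `{r^k}` is an `L^{(α)}`-multiplier sequence iff `r = 1`. -/
theorem geometric_laguerre_ms_iff (α r : ℝ) (hα : -1 < α) (hr : r ≠ 0) :
    IsLaguerreMS α (fun k => r ^ k) ↔ r = 1 :=
  geometric_laguerre_ms_iff_general α r hr
end

section
/- The generalized Laguerre polynomial L_n^{(α)} satisfies the differential equation n·L_n^{(α)}(x) = (x - α - 1)·(L_n^{(α)})'(x) - x·(L_n^{(α)})''(x). -/
/-!
Comparing coefficients of `X ^ k`, the operator `p ↦ (X - C a) p' - X p''` sends `p` to
`k c_k - (k + 1)(k + a) c_{k+1}`, where `c_k` is the `k`-th coefficient of `p`. With `a = α + 1`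
the equation therefore reduces to the two-term recurrence
`(n - k) c_k = -(k + 1)(k + α + 1) c_{k+1}`, which the closed form of the Laguerre coefficients
satisfies for `k < n`: the product defining `c_k` has one factor more than that of `c_{k+1}`,
namely `n + α - (n - k - 1) = k + α + 1`, while the factorials contribute `(k + 1) / (n - k)` and
the sign flips. For `k ≥ n` both sides vanish.
-/

open Polynomial

namespace Polynomial

theorem coeff_X_mul_derivative {R : Type*} [Semiring R] (p : R[X]) (k : ℕ) :
    (X * derivative p).coeff k = p.coeff k * k := by
  cases k with
  | zero => simp
  | succ k => rw [coeff_X_mul, coeff_derivative, Nat.cast_succ]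

theorem coeff_laguerreOperator {R : Type*} [CommRing R] (a : R) (p : R[X]) (k : ℕ) :
    ((X - C a) * derivative p - X * derivative (derivative p)).coeff k =
      k * p.coeff k - (k + 1) * (k + a) * p.coeff (k + 1) := by
  rw [sub_mul, coeff_sub, coeff_sub, coeff_X_mul_derivative, coeff_X_mul_derivative, coeff_C_mul,
    coeff_derivative]
  ring

end Polynomial

noncomputable def laguerreCoeff (α : ℝ) (n k : ℕ) : ℝ :=
  (∏ i ∈ Finset.range (n - k), ((n : ℝ) + α - i)) / (Nat.factorial (n - k)) *
      (-1) ^ k / (Nat.factorial k)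

theorem coeff_Laguerre (α : ℝ) (n k : ℕ) :
    (Laguerre α n).coeff k = if k ≤ n then laguerreCoeff α n k else 0 := by
  simp only [Laguerre, finsetSum_coeff, coeff_C_mul, coeff_X_pow, mul_ite, mul_one, mul_zero,
    Finset.sum_ite_eq, Finset.mem_range, Nat.lt_succ_iff, laguerreCoeff]

theorem sub_mul_laguerreCoeff (α : ℝ) {n k : ℕ} (hk : k < n) :
    ((n : ℝ) - k) * laguerreCoeff α n k =
      -((k + 1) * (k + α + 1)) * laguerreCoeff α n (k + 1) := by
  obtain ⟨m, rfl⟩ : ∃ m, n = m + (k + 1) := ⟨n - (k + 1), by omega⟩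
  rw [laguerreCoeff, laguerreCoeff, show m + (k + 1) - k = m + 1 by omega, Nat.add_sub_cancel,
    Finset.prod_range_succ, Nat.factorial_succ, Nat.factorial_succ k]
  push_cast
  field_simp
  ring

theorem sub_mul_coeff_Laguerre (α : ℝ) (n k : ℕ) :
    ((n : ℝ) - k) * (Laguerre α n).coeff k =
      -((k + 1) * (k + α + 1)) * (Laguerre α n).coeff (k + 1) := by
  simp only [coeff_Laguerre]
  rcases lt_trichotomy k n with hlt | rfl | hgt
  · rw [if_pos hlt.le, if_pos (show k + 1 ≤ n from hlt), sub_mul_laguerreCoeff α hlt]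
  · simp
  · simp [hgt.not_ge, (hgt.trans (Nat.lt_succ_self k)).not_ge]

theorem laguerre_ode_general (α : ℝ) (n : ℕ) :
    (n : ℝ) • Laguerre α n =
      (X - C (α + 1)) * derivative (Laguerre α n) -
        X * derivative (derivative (Laguerre α n)) := by
  ext k
  rw [coeff_smul, smul_eq_mul, coeff_laguerreOperator]
  linear_combination sub_mul_coeff_Laguerre α n k

/-- The Laguerre differential equation:
`n L_n^{(α)}(x) = (x - α - 1) (L_n^{(α)})'(x) - x (L_n^{(α)})''(x)`. -/
theorem laguerre_ode (α : ℝ) (hα : -1 < α) (n : ℕ) :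
    (n : ℝ) • Laguerre α n =
      (X - C (α + 1)) * derivative (Laguerre α n) -
        X * derivative (derivative (Laguerre α n)) :=
  laguerre_ode_general α n
end

section
/- Let α > -1 and 0 ≤ a ≤ α+1, and set w_0 = a/(α+1). If w is a complex number with positive imaginary part, then the complex number z = (α+1)·(w + w_0)/(w·(w+1)) has negative imaginary part. Consequently, the polynomial a - w(w+1)z + w(α+1) in two complex variables z, w does not vanish when both Im z > 0 and Im w > 0. -/
/-! The partial fraction decomposition `(w + c) / (w (w + 1)) = c / w + (1 - c) / (w + 1)` writes
the expression, for `0 ≤ c ≤ 1`, as a convex combination of `1 / w` and `1 / (w + 1)`. Inversion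
maps the upper half-plane to the lower one, so the combination lies in the lower half-plane; so
does its product with `α + 1 > 0`. If `a - w (w + 1) z + w (α + 1) = 0` then `z` is exactly this
product for `c = a / (α + 1)`, so `z` cannot lie in the upper half-plane. -/

namespace Complex

theorem ne_zero_of_im_pos {w : ℂ} (hw : 0 < w.im) : w ≠ 0 := fun h => by simp [h] at hw

theorem im_inv_neg_of_im_pos {w : ℂ} (hw : 0 < w.im) : w⁻¹.im < 0 := by
  rw [inv_im, neg_div]
  exact neg_neg_of_pos (div_pos hw (normSq_pos.mpr (ne_zero_of_im_pos hw)))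

theorem add_ofReal_div_mul_add_one {w : ℂ} (hw0 : w ≠ 0) (hw1 : w + 1 ≠ 0) (c : ℝ) :
    (w + c) / (w * (w + 1)) = c * w⁻¹ + ((1 - c : ℝ) : ℂ) * (w + 1)⁻¹ := by
  push_cast
  field_simp
  ring

theorem im_add_ofReal_div_mul_add_one_neg {w : ℂ} (hw : 0 < w.im) {c : ℝ} (hc0 : 0 ≤ c)
    (hc1 : c ≤ 1) : ((w + c) / (w * (w + 1))).im < 0 := by
  have hw1_im : 0 < (w + 1).im := by simpa using hw
  set x := w⁻¹.im
  set y := (w + 1)⁻¹.im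
  have hmax : max x y < 0 := max_lt (im_inv_neg_of_im_pos hw) (im_inv_neg_of_im_pos hw1_im)
  rw [add_ofReal_div_mul_add_one (ne_zero_of_im_pos hw) (ne_zero_of_im_pos hw1_im), add_im,
    im_ofReal_mul, im_ofReal_mul]
  linarith [mul_le_mul_of_nonneg_left (le_max_left x y) hc0,
    mul_le_mul_of_nonneg_left (le_max_right x y) (sub_nonneg.2 hc1)]

end Complex

/-- For `-1 < α`, `0 ≤ a ≤ α+1`, `w₀ = a/(α+1)`: if `Im w > 0` then
`z = (α+1)(w+w₀)/(w(w+1))` has `Im z < 0`; consequently `a - w(w+1)z + w(α+1) ≠ 0`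
whenever `Im z > 0` and `Im w > 0`. -/
theorem laguerre_symbol_nonvanishing (α a : ℝ) (hα : -1 < α) (ha0 : 0 ≤ a) (ha1 : a ≤ α + 1) :
    (∀ w : ℂ, 0 < w.im →
      (((α : ℂ) + 1) * (w + ((a / (α + 1) : ℝ) : ℂ)) / (w * (w + 1))).im < 0) ∧
    ∀ z w : ℂ, 0 < z.im → 0 < w.im →
      (a : ℂ) - w * (w + 1) * z + w * ((α : ℂ) + 1) ≠ 0 := by
  have hα1 : 0 < α + 1 := by linarith
  have him_neg : ∀ w : ℂ, 0 < w.im →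
      (((α : ℂ) + 1) * (w + ((a / (α + 1) : ℝ) : ℂ)) / (w * (w + 1))).im < 0 := by
    intro w hw
    have hc := Complex.im_add_ofReal_div_mul_add_one_neg hw (div_nonneg ha0 hα1.le)
      ((div_le_one hα1).mpr ha1)
    have hα_cast : (α : ℂ) + 1 = ((α + 1 : ℝ) : ℂ) := by push_cast; rfl
    rw [mul_div_assoc, hα_cast, Complex.im_ofReal_mul]
    exact mul_neg_of_pos_of_neg hα1 hc
  refine ⟨him_neg, fun z w hz hw hzero => ?_⟩
  have hw0 := Complex.ne_zero_of_im_pos hw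
  have hw1 : w + 1 ≠ 0 := Complex.ne_zero_of_im_pos (by simpa using hw)
  have hz_eq : z = ((α : ℂ) + 1) * (w + ((a / (α + 1) : ℝ) : ℂ)) / (w * (w + 1)) := by
    have hα1' : (α : ℂ) + 1 ≠ 0 := by exact_mod_cast hα1.ne'
    push_cast
    field_simp
    linear_combination -hzero
  exact (him_neg w hw).not_gt (hz_eq ▸ hz)
end

section
/- Let δ = (x-(α+1))D - xD^2 and write δ(δ-1)⋯(δ-(n-1)) = Σ_{k=n}^{2n} q_k(x)D^k with polynomial coefficients q_k. Then Σ_{k=n}^{2n} q_k(x) = (-1)^n·∏_{k=1}^n (α+k), a constant independent of x. -/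
open Polynomial

/-- The operator `δ[p] = (x-(α+1))p' - x p''`. -/
noncomputable def laguerreDelta (α : ℝ) (p : Polynomial ℝ) : Polynomial ℝ :=
  (X - C (α + 1)) * derivative p - X * derivative (derivative p)

/-- The operator `(δ-(m-1))⋯(δ-1)δ` (which equals `δ(δ-1)⋯(δ-(m-1))` since the factors
commute). -/
noncomputable def laguerreDeltaFalling (α : ℝ) : ℕ → Polynomial ℝ → Polynomial ℝ
  | 0, p => p
  | (m + 1), p =>
      laguerreDelta α (laguerreDeltaFalling α m p) - (m : ℝ) • laguerreDeltaFalling α m p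

/-!
Both sides are read off by applying the operator to `e^x`: since `D e^x = e^x`, the right-hand
side gives `(∑ q_k) e^x`, while `δ e^x = -(α+1) e^x`, so `δ(δ-1)⋯(δ-(n-1)) e^x` is
`∏_{j<n} (-(α+1) - j) e^x`. On polynomials we use a truncation `p` of `e^x`, which satisfies
`D p ≡ p` modulo a high power of `X`; every application of `D` or `δ` costs one power of `X`, so
both identities survive modulo `X^M` for any prescribed `M`, and `p(0) = 1` lets us cancel `p`.
-/

section DerivativeModXPow

variable {R : Type*} [CommRing R]

theorem X_pow_dvd_derivative_trunc_sub_trunc (f : PowerSeries R)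
    (hf : PowerSeries.derivative R f = f) (N : ℕ) :
    X ^ N ∣ derivative (PowerSeries.trunc (N + 1) f) - PowerSeries.trunc (N + 1) f := by
  rw [← PowerSeries.trunc_derivative, hf, PowerSeries.trunc_succ, sub_add_cancel_left,
    ← C_mul_X_pow_eq_monomial, dvd_neg]
  exact dvd_mul_left _ _

theorem X_pow_dvd_X_mul_derivative {r : R[X]} {m : ℕ} (h : X ^ m ∣ r) :
    X ^ m ∣ X * derivative r := by
  rcases m with _ | m
  · simp
  · rw [pow_succ']
    exact mul_dvd_mul_left X (by simpa using pow_sub_one_dvd_derivative_of_pow_dvd h)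

theorem X_pow_dvd_iterate_derivative_sub_self {p : R[X]} {M k : ℕ}
    (hp : X ^ (M + k) ∣ derivative p - p) : X ^ M ∣ derivative^[k] p - p := by
  induction k generalizing M with
  | zero => simp
  | succ k ih =>
    have hk : X ^ (M + 1) ∣ derivative^[k] p - p := ih (by rwa [Nat.add_right_comm])
    have hD : derivative^[k + 1] p - p =
        derivative (derivative^[k] p - p) + (derivative p - p) := by
      rw [Function.iterate_succ_apply', derivative_sub]; ring
    have hk' : X ^ M ∣ derivative (derivative^[k] p - p) := by
      simpa using pow_sub_one_dvd_derivative_of_pow_dvd hk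
    rw [hD]
    exact hk'.add ((pow_dvd_pow X (by omega)).trans hp)

theorem X_pow_dvd_sum_mul_iterate_derivative_sub {p : R[X]} {M K : ℕ} {s : Finset ℕ}
    (hs : ∀ k ∈ s, k ≤ K) (q : ℕ → R[X]) (hp : X ^ (M + K) ∣ derivative p - p) :
    X ^ M ∣ ∑ k ∈ s, q k * derivative^[k] p - (∑ k ∈ s, q k) * p := by
  rw [Finset.sum_mul, ← Finset.sum_sub_distrib]
  refine Finset.dvd_sum fun k hk => ?_
  rw [← mul_sub]
  exact (X_pow_dvd_iterate_derivative_sub_self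
    ((pow_dvd_pow X (by have := hs k hk; omega)).trans hp)).mul_left _

end DerivativeModXPow

theorem eq_zero_of_X_pow_dvd_mul {R : Type*} [CommRing R] [IsDomain R] {r p : R[X]}
    (hp : p.coeff 0 ≠ 0) (h : X ^ (r.natDegree + 1) ∣ r * p) : r = 0 := by
  have hr : X ^ (r.natDegree + 1) ∣ r :=
    prime_X.pow_dvd_of_dvd_mul_right _ (by rwa [X_dvd_iff]) h
  exact eq_zero_of_dvd_of_natDegree_lt hr (by simp)

section LaguerreDelta

variable (α : ℝ)

theorem laguerreDelta_sub (p r : ℝ[X]) :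
    laguerreDelta α (p - r) = laguerreDelta α p - laguerreDelta α r := by
  simp only [laguerreDelta, derivative_sub]; ring

theorem laguerreDelta_C_mul (c : ℝ) (p : ℝ[X]) :
    laguerreDelta α (C c * p) = C c * laguerreDelta α p := by
  simp only [laguerreDelta, derivative_C_mul]; ring

theorem X_pow_dvd_laguerreDelta {p : ℝ[X]} {m : ℕ} (hp : X ^ (m + 1) ∣ p) :
    X ^ m ∣ laguerreDelta α p := by
  have h1 : X ^ m ∣ derivative p := by
    simpa using pow_sub_one_dvd_derivative_of_pow_dvd hp
  exact (h1.mul_left _).sub (X_pow_dvd_X_mul_derivative h1)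

theorem X_pow_dvd_laguerreDelta_add_mul_self {p : ℝ[X]} {N : ℕ}
    (hp : X ^ N ∣ derivative p - p) : X ^ N ∣ laguerreDelta α p + C (α + 1) * p := by
  have h : laguerreDelta α p + C (α + 1) * p =
      -C (α + 1) * (derivative p - p) - X * derivative (derivative p - p) := by
    simp only [laguerreDelta, derivative_sub]; ring
  rw [h]
  exact (hp.mul_left _).sub (X_pow_dvd_X_mul_derivative hp)

theorem X_pow_dvd_laguerreDeltaFalling_sub {p : ℝ[X]} {M : ℕ} (m : ℕ)
    (hp : X ^ (M + m) ∣ derivative p - p) :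
    X ^ M ∣ laguerreDeltaFalling α m p - C ((-1) ^ m * ∏ k ∈ Finset.Icc 1 m, (α + k)) * p := by
  induction m generalizing M with
  | zero => simp [laguerreDeltaFalling]
  | succ m ih =>
    set c := (-1) ^ m * ∏ k ∈ Finset.Icc 1 m, (α + k)
    have hc : (-1) ^ (m + 1) * ∏ k ∈ Finset.Icc 1 (m + 1), (α + k) = -(α + 1 + m) * c := by
      rw [Finset.prod_Icc_succ_top (by omega)]; push_cast; ring
    have hF : X ^ (M + 1) ∣ laguerreDeltaFalling α m p - C c * p :=
      ih (by rwa [Nat.add_right_comm])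
    have hδ : X ^ M ∣ laguerreDelta α p + C (α + 1) * p :=
      (pow_dvd_pow X (by omega)).trans (X_pow_dvd_laguerreDelta_add_mul_self α hp)
    have h : laguerreDeltaFalling α (m + 1) p - C (-(α + 1 + m) * c) * p =
        laguerreDelta α (laguerreDeltaFalling α m p - C c * p)
          + C c * (laguerreDelta α p + C (α + 1) * p)
          - C (m : ℝ) * (laguerreDeltaFalling α m p - C c * p) := by
      rw [laguerreDelta_sub, laguerreDelta_C_mul, laguerreDeltaFalling, smul_eq_C_mul]
      simp only [map_mul, map_neg, map_add, map_one, map_natCast]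
      ring
    rw [hc, h]
    exact ((X_pow_dvd_laguerreDelta α hF).add (hδ.mul_left _)).sub
      (((pow_dvd_pow X M.le_succ).trans hF).mul_left _)

end LaguerreDelta

theorem deltaFalling_coeff_sum_general (α : ℝ) (n : ℕ) (q : ℕ → Polynomial ℝ)
    (hq : ∀ p : Polynomial ℝ,
      laguerreDeltaFalling α n p = ∑ k ∈ Finset.Icc n (2 * n), q k * derivative^[k] p) :
    ∑ k ∈ Finset.Icc n (2 * n), q k =
      Polynomial.C ((-1) ^ n * ∏ k ∈ Finset.Icc 1 n, (α + k)) := by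
  set c := (-1) ^ n * ∏ k ∈ Finset.Icc 1 n, (α + k)
  set r := ∑ k ∈ Finset.Icc n (2 * n), q k - C c
  set M := r.natDegree + 1
  set p := PowerSeries.trunc (M + 2 * n + 1) (PowerSeries.exp ℝ)
  have hp : X ^ (M + 2 * n) ∣ derivative p - p :=
    X_pow_dvd_derivative_trunc_sub_trunc _ (PowerSeries.derivative_exp ℝ) _
  have hp0 : p.coeff 0 = 1 := by
    simp [p, PowerSeries.coeff_trunc, PowerSeries.coeff_exp]
  have hδ : X ^ M ∣ laguerreDeltaFalling α n p - C c * p :=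
    X_pow_dvd_laguerreDeltaFalling_sub α n ((pow_dvd_pow X (by omega)).trans hp)
  have hD := X_pow_dvd_sum_mul_iterate_derivative_sub
    (s := Finset.Icc n (2 * n)) (fun k hk => (Finset.mem_Icc.mp hk).2) q hp
  rw [← hq] at hD
  have hr : X ^ M ∣ r * p := by
    simpa [r, sub_mul] using hδ.sub hD
  exact sub_eq_zero.mp (eq_zero_of_X_pow_dvd_mul (by simp [hp0]) hr)

/-- If `δ(δ-1)⋯(δ-(n-1)) = ∑_{k=n}^{2n} q_k(x) D^k` as operators on `ℝ[x]`, then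
`∑_{k=n}^{2n} q_k(x) = (-1)^n ∏_{k=1}^n (α+k)`, a constant. -/
theorem deltaFalling_coeff_sum (α : ℝ) (n : ℕ) (hn : 1 ≤ n) (q : ℕ → Polynomial ℝ)
    (hq : ∀ p : Polynomial ℝ,
      laguerreDeltaFalling α n p = ∑ k ∈ Finset.Icc n (2 * n), q k * derivative^[k] p) :
    ∑ k ∈ Finset.Icc n (2 * n), q k =
      Polynomial.C ((-1) ^ n * ∏ k ∈ Finset.Icc 1 n, (α + k)) :=
  deltaFalling_coeff_sum_general α n q hq
end

section
/- Let p and q be real polynomials with deg q < deg p. If p has only simple real zeros, then there exists ε > 0 such that for every real b with |b| < ε, the polynomial p + b·q has only real zeros. -/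
/-!
Around each of the `n = deg p` simple real roots `r` of `p` pick a small interval
`(r - d, r + d)` at whose endpoints `p` takes values of opposite signs, the intervals pairwise
disjoint. Opposite signs at finitely many points survive the perturbation `p + b q` for small `b`,
so `p + b q` has a root in each of the `n` intervals by the intermediate value theorem. Since
`deg (p + b q) = n`, these are all its roots, and they are real.
-/

open Polynomial Filter Topology Metric

theorem Finset.eventually_pairwiseDisjoint_ball {α : Type*} [MetricSpace α] (S : Finset α) :
    ∀ᶠ d in 𝓝 (0 : ℝ), (S : Set α).PairwiseDisjoint fun x => ball x d := by
  have hpair : ∀ x ∈ S, ∀ y ∈ S, ∀ᶠ d in 𝓝 (0 : ℝ), x ≠ y → Disjoint (ball x d) (ball y d) := by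
    intro x _ y _
    rcases eq_or_ne x y with rfl | hxy
    · exact Eventually.of_forall fun _ h => absurd rfl h
    · filter_upwards [eventually_lt_nhds (half_pos (dist_pos.2 hxy))] with d hd _
      exact ball_disjoint_ball (by linarith)
  filter_upwards [(eventually_all_finset S).2 fun x hx => (eventually_all_finset S).2 (hpair x hx)]
    with d hd x hx y hy hxy
  exact hd x hx y hy hxy

theorem exists_mem_Ioo_eq_zero_of_mul_neg {f : ℝ → ℝ} {a b : ℝ} (hab : a ≤ b)
    (hf : ContinuousOn f (Set.Icc a b)) (h : f a * f b < 0) : ∃ x ∈ Set.Ioo a b, f x = 0 := by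
  rcases mul_neg_iff.1 h with ⟨ha, hb⟩ | ⟨ha, hb⟩
  · exact intermediate_value_Ioo' hab hf ⟨hb, ha⟩
  · exact intermediate_value_Ioo hab hf ⟨ha, hb⟩

namespace Polynomial

theorem splits_iff_forall_im_eq_zero {p : ℝ[X]} (hp : p ≠ 0) :
    p.Splits ↔ ∀ z : ℂ, aeval z p = 0 → z.im = 0 := by
  constructor
  · intro hs z hz
    obtain ⟨x, rfl⟩ := hs.mem_range_of_isRoot hp (i := algebraMap ℝ ℂ)
      (by simpa [IsRoot, eval_map_algebraMap] using hz)
    simp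
  · intro h
    refine Splits.of_splits_map (algebraMap ℝ ℂ) (IsAlgClosed.splits _) fun z hz => ?_
    rw [mem_roots', IsRoot, eval_map_algebraMap] at hz
    exact ⟨z.re, Complex.ext (by simp) (by simp [h z hz.2])⟩

theorem eventually_eval_sub_mul_eval_add_neg {p : ℝ[X]} {r : ℝ} (hr : p.IsRoot r)
    (hr' : p.derivative.eval r ≠ 0) :
    ∀ᶠ d in 𝓝[>] 0, p.eval (r - d) * p.eval (r + d) < 0 := by
  set g := p /ₘ (X - C r)
  -- `p (r - d) * p (r + d) = -d² g (r - d) g (r + d)`, and `g r = p' r ≠ 0`.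
  have hp : p = (X - C r) * g := (mul_divByMonic_eq_iff_isRoot.2 hr).symm
  have hg : g.eval r = p.derivative.eval r := by
    simp [g, ← divByMonic_add_X_sub_C_mul_derivative_divByMonic_eq_derivative p r]
  have hpos : ∀ᶠ d in 𝓝 0, 0 < g.eval (r - d) * g.eval (r + d) := by
    refine (Continuous.tendsto (by fun_prop) 0).eventually_const_lt ?_
    simpa [hg] using hr'
  filter_upwards [eventually_nhdsWithin_of_eventually_nhds hpos, self_mem_nhdsWithin]
    with d hd (hd0 : 0 < d)
  rw [hp]
  simp only [eval_mul, eval_sub, eval_X, eval_C]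
  nlinarith [mul_pos hd0 hd0]

theorem card_le_card_roots_toFinset_of_sign_changes {f : ℝ[X]} {S : Finset ℝ} {d : ℝ}
    (hd : 0 < d)
    (hdisj : (S : Set ℝ).PairwiseDisjoint fun r => ball r d)
    (hsign : ∀ r ∈ S, f.eval (r - d) * f.eval (r + d) < 0) :
    S.card ≤ f.roots.toFinset.card := by
  have hroot : ∀ r ∈ S, ∃ x ∈ ball r d, f.IsRoot x := by
    intro r hr
    rw [Real.ball_eq_Ioo]
    exact exists_mem_Ioo_eq_zero_of_mul_neg (by linarith) f.continuous.continuousOn (hsign r hr)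
  choose! x hx hxroot using hroot
  refine Finset.card_le_card_of_injOn x (fun r hr => ?_) fun r hr r' hr' hrr' => ?_
  · have hf : f ≠ 0 := fun h => by simpa [h] using hsign r hr
    simpa [hf] using hxroot r hr
  · by_contra hne
    exact Set.disjoint_left.1 (hdisj hr hr' hne) (hx r hr) (hrr' ▸ hx r' hr')

theorem eventually_eval_add_C_mul_mul_neg {p q : ℝ[X]} {x y : ℝ}
    (h : p.eval x * p.eval y < 0) :
    ∀ᶠ b in 𝓝 0, (p + C b * q).eval x * (p + C b * q).eval y < 0 := by
  simp only [eval_add, eval_mul, eval_C]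
  exact (Continuous.tendsto (by fun_prop) 0).eventually_lt_const (by simpa using h)

end Polynomial

theorem perturbation_real_rooted_general (p q : Polynomial ℝ) (hdeg : q.degree < p.degree)
    (hsq : Squarefree p)
    (hreal : ∀ z : ℂ, Polynomial.aeval z p = 0 → z.im = 0) :
    ∃ ε > 0, ∀ b : ℝ, |b| < ε →
      ∀ z : ℂ, Polynomial.aeval z (p + C b * q) = 0 → z.im = 0 := by
  have hsep : p.Separable := PerfectField.separable_iff_squarefree.2 hsq
  set S := p.roots.toFinset
  have hS : S.card = p.natDegree := by
    rw [Multiset.toFinset_card_of_nodup (nodup_roots hsep),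
      splits_iff_card_roots.1 ((splits_iff_forall_im_eq_zero hsq.ne_zero).2 hreal)]
  have hsign : ∀ r ∈ S, ∀ᶠ d in 𝓝[>] 0, p.eval (r - d) * p.eval (r + d) < 0 := fun r hr =>
    have hr : p.IsRoot r := (mem_roots hsq.ne_zero).1 (Multiset.mem_toFinset.1 hr)
    eventually_eval_sub_mul_eval_add_neg hr (hsep.eval₂_derivative_ne_zero (RingHom.id ℝ) hr)
  obtain ⟨d, ⟨hpd, hdisj⟩, hd⟩ := (((eventually_all_finset S).2 hsign).and
    (eventually_nhdsWithin_of_eventually_nhds S.eventually_pairwiseDisjoint_ball)).and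
    self_mem_nhdsWithin |>.exists
  obtain ⟨ε, hε, hpert⟩ := Metric.eventually_nhds_iff.1 <|
    (eventually_all_finset S).2 fun r hr => eventually_eval_add_C_mul_mul_neg (q := q) (hpd r hr)
  refine ⟨ε, hε, fun b hb z hz => ?_⟩
  have hbq : (C b * q).degree < p.degree := (smul_eq_C_mul b ▸ degree_smul_le b q).trans_lt hdeg
  have hne : p + C b * q ≠ 0 := ne_zero_of_degree_gt (degree_add_eq_left_of_degree_lt hbq ▸ hdeg)
  have hroots : (p + C b * q).roots.card = (p + C b * q).natDegree := by
    refine le_antisymm (card_roots' _) ?_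
    calc (p + C b * q).natDegree = S.card := by rw [hS, natDegree_add_eq_left_of_degree_lt hbq]
      _ ≤ (p + C b * q).roots.toFinset.card :=
        card_le_card_roots_toFinset_of_sign_changes hd hdisj (hpert (by simpa using hb))
      _ ≤ _ := Multiset.toFinset_card_le _
  exact (splits_iff_forall_im_eq_zero hne).1 (splits_iff_card_roots.2 hroots) z hz

/-- If `p` has only simple real zeros and `deg q < deg p`, then small perturbations
`p + b q` still have only real zeros. -/
theorem perturbation_real_rooted (p q : Polynomial ℝ) (hdeg : q.degree < p.degree)
    (hp0 : p ≠ 0) (hsq : Squarefree p)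
    (hreal : ∀ z : ℂ, Polynomial.aeval z p = 0 → z.im = 0) :
    ∃ ε > 0, ∀ b : ℝ, |b| < ε →
      ∀ z : ℂ, Polynomial.aeval z (p + C b * q) = 0 → z.im = 0 :=
  perturbation_real_rooted_general p q hdeg hsq hreal
end

section
/- Let p and q be real polynomials with deg q < deg p. If p has at least one non-real zero, then there exists ε > 0 such that for every real b with |b| < ε, the polynomial p + b·q has at least one non-real zero. -/
open Polynomial

/-!
Factoring over `ℂ`, a real polynomial `P` whose zeros are all real satisfies
`|P(z)| ≥ |lc P| * |Im z| ^ deg P`, because every zero lies at distance at least `|Im z|`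
from `z`. At a non-real zero `z` of `p`, the perturbation `p + b q` takes the value `b q(z)`,
which falls below this bound for small `b`, while the degree and leading coefficient of
`p + b q` are those of `p`.
-/

theorem Polynomial.abs_leadingCoeff_mul_abs_im_pow_le_norm_aeval {P : ℝ[X]}
    (hP : ∀ r ∈ P.aroots ℂ, r.im = 0) (z : ℂ) :
    |P.leadingCoeff| * |z.im| ^ P.natDegree ≤ ‖aeval z P‖ := by
  rw [(IsAlgClosed.splits _).aeval_eq_prod_aroots z, norm_mul, norm_algebraMap',
    Real.norm_eq_abs, ← IsAlgClosed.card_aroots_eq_natDegree (B := ℂ),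
    ← Multiset.prod_replicate, ← Multiset.map_const']
  gcongr
  refine le_of_le_of_eq ?_ (map_multiset_prod (normHom : ℂ →*₀ ℝ) _).symm
  rw [Multiset.map_map]
  refine Multiset.prod_map_le_prod_map₀ _ _ (fun _ _ => abs_nonneg _) fun r hr => ?_
  simpa [hP r hr] using Complex.abs_im_le_norm (z - r)

theorem Polynomial.exists_aeval_eq_zero_im_ne_zero_of_norm_aeval_lt {P : ℝ[X]} {z : ℂ}
    (h : ‖aeval z P‖ < |P.leadingCoeff| * |z.im| ^ P.natDegree) :
    ∃ w : ℂ, aeval w P = 0 ∧ w.im ≠ 0 := by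
  by_contra! hreal
  refine h.not_ge (abs_leadingCoeff_mul_abs_im_pow_le_norm_aeval (fun r hr => ?_) z)
  exact hreal r (mem_aroots.mp hr).2

/-- If `p` has a non-real zero and `deg q < deg p`, then small perturbations
`p + b q` still have a non-real zero. -/
theorem perturbation_nonreal_root (p q : Polynomial ℝ) (hdeg : q.degree < p.degree)
    (hp : ∃ z : ℂ, Polynomial.aeval z p = 0 ∧ z.im ≠ 0) :
    ∃ ε > 0, ∀ b : ℝ, |b| < ε →
      ∃ z : ℂ, Polynomial.aeval z (p + C b * q) = 0 ∧ z.im ≠ 0 := by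
  obtain ⟨z, hz, hz_im⟩ := hp
  have hlc : p.leadingCoeff ≠ 0 := leadingCoeff_ne_zero.mpr (ne_zero_of_degree_gt hdeg)
  set M := |p.leadingCoeff| * |z.im| ^ p.natDegree
  set A := ‖aeval z q‖
  refine ⟨M / (A + 1), by positivity, fun b hb => ?_⟩
  have hbq : (C b * q).degree < p.degree := by
    rw [C_mul']
    exact (degree_smul_le b q).trans_lt hdeg
  apply exists_aeval_eq_zero_im_ne_zero_of_norm_aeval_lt (z := z)
  rw [leadingCoeff_add_of_degree_lt' hbq, natDegree_add_eq_left_of_degree_lt hbq, map_add, hz,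
    zero_add, map_mul, aeval_C, norm_mul, norm_algebraMap', Real.norm_eq_abs]
  calc |b| * A ≤ |b| * (A + 1) := by gcongr; linarith
    _ < M := (lt_div_iff₀ (by positivity)).mp hb
end
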